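/- Consider the complex ODE Ȧ = γA − 3|A|²A − Ā³ with γ > 0. In polar coordinates A = ρ e^{iθ} this is equivalent to ρ̇ = γρ − 3ρ³ − ρ³cos(4θ), θ̇ = ρ² sin(4θ). Its nontrivial equilibria with θ ∈ [0, π/2) are (ρ, θ) = (√γ/2, 0) and (ρ, θ) = (√(γ/2), π/4); the first is linearly unstable and the second is asymptotically stable. -/

import Mathlib

open Real Complex

/-- the complex ODE `Ȧ = γA − 3|A|²A − Ā³` with `γ > 0` in polar
coordinates `A = ρe^{iθ}` becomes `ρ̇ = γρ − 3ρ³ − ρ³cos(4θ)`,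
`θ̇ = ρ²sin(4θ)`; its nontrivial equilibria with `θ ∈ [0, π/2)` are
`(√γ/2, 0)` (linearly unstable) and `(√(γ/2), π/4)` (asymptotically stable). -/
theorem amplitude_ode_N2
    (γ : ℝ) (hγ : 0 < γ)
    (fρ fθ : ℝ → ℝ → ℝ)
    (hfρ : ∀ ρ θ, fρ ρ θ = γ * ρ - 3 * ρ^3 - ρ^3 * Real.cos (4 * θ))
    (hfθ : ∀ ρ θ, fθ ρ θ = ρ^2 * Real.sin (4 * θ)) :
    -- polar form: solutions of the planar system give solutions of the complex ODE
    (∀ (ρ θ : ℝ → ℝ) (t : ℝ),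
      HasDerivAt ρ (fρ (ρ t) (θ t)) t → HasDerivAt θ (fθ (ρ t) (θ t)) t →
      HasDerivAt (fun s => (ρ s : ℂ) * Complex.exp (Complex.I * (θ s : ℂ)))
        ((γ : ℂ) * ((ρ t : ℂ) * Complex.exp (Complex.I * (θ t : ℂ)))
          - 3 * (‖(ρ t : ℂ) * Complex.exp (Complex.I * (θ t : ℂ))‖)^2
              * ((ρ t : ℂ) * Complex.exp (Complex.I * (θ t : ℂ)))
          - ((starRingEnd ℂ) ((ρ t : ℂ) * Complex.exp (Complex.I * (θ t : ℂ))))^3) t) ∧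
    -- equilibria with ρ > 0, θ ∈ [0, π/2)
    (∀ ρ θ : ℝ, 0 < ρ → θ ∈ Set.Ico 0 (π / 2) →
      ((fρ ρ θ = 0 ∧ fθ ρ θ = 0) ↔
        ((ρ = Real.sqrt γ / 2 ∧ θ = 0) ∨ (ρ = Real.sqrt (γ / 2) ∧ θ = π / 4)))) ∧
    -- linearized (in)stability
    0 < deriv (fun θ => fθ (Real.sqrt γ / 2) θ) 0 ∧
    deriv (fun θ => fθ (sqrt (γ / 2)) θ) (π / 4) < 0 ∧
    deriv (fun ρ => fρ ρ (π / 4)) (sqrt (γ / 2)) < 0 := by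
  have hsg : Real.sqrt γ ^ 2 = γ := Real.sq_sqrt hγ.le
  have hsg2 : Real.sqrt (γ/2) ^ 2 = γ/2 := Real.sq_sqrt (by linarith)
  have hsgpos : 0 < Real.sqrt γ := Real.sqrt_pos.mpr hγ
  have hsg2pos : 0 < Real.sqrt (γ/2) := Real.sqrt_pos.mpr (by linarith)
  refine ⟨?_, ?_, ?_, ?_, ?_⟩
  · -- polar form
    intro ρ θ t hρ hθ
    rw [hfρ, hfθ] at *
    have h1 : HasDerivAt (fun s => ((ρ s : ℝ) : ℂ))
        ((γ * ρ t - 3 * ρ t ^ 3 - ρ t ^ 3 * Real.cos (4 * θ t) : ℝ) : ℂ) t := hρ.ofReal_comp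
    have h2 : HasDerivAt (fun s => Complex.exp (Complex.I * (θ s : ℂ)))
        (Complex.exp (Complex.I * (θ t : ℂ)) *
          (Complex.I * ((ρ t ^ 2 * Real.sin (4 * θ t) : ℝ) : ℂ))) t := by
      have := (hθ.ofReal_comp.const_mul Complex.I).cexp
      simpa [mul_comm] using this
    have h3 := h1.mul h2
    refine h3.congr_deriv ?_
    set c : ℂ := ((θ t : ℝ) : ℂ)
    set r : ℝ := ρ t
    have habs : ((‖(r : ℂ) * Complex.exp (Complex.I * c)‖ : ℂ))^2 = (r:ℂ)^2 := by
      have : ((‖(r : ℂ) * Complex.exp (Complex.I * c)‖)^2 : ℝ) = r^2 := by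
        rw [norm_mul, Complex.norm_exp]
        simp [c, Complex.sq_norm, Complex.normSq_ofReal, mul_pow]
      exact_mod_cast this
    have hconj : ((starRingEnd ℂ) ((r : ℂ) * Complex.exp (Complex.I * c)))^3
        = (r : ℂ)^3 * ((Complex.cos (4*c) - Complex.sin (4*c) * Complex.I)
            * Complex.exp (Complex.I * c)) := by
      rw [map_mul, Complex.conj_ofReal, ← Complex.exp_conj]
      have hc1 : (starRingEnd ℂ) (Complex.I * c) = -(Complex.I * c) := by
        simp [c, Complex.conj_ofReal]
      rw [hc1, mul_pow]
      congr 1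
      have hc2 : Complex.exp (-(Complex.I * c)) ^ (3:ℕ)
          = Complex.exp ((3:ℕ) * -(Complex.I*c)) := by rw [Complex.exp_nat_mul]
      rw [hc2, show ((3:ℕ):ℂ) * -(Complex.I*c) = (-(4*c))*Complex.I + c * Complex.I by
            push_cast; ring,
        Complex.exp_add, Complex.exp_mul_I, Complex.cos_neg, Complex.sin_neg]
      ring_nf
    rw [hconj, habs]
    push_cast [Complex.ofReal_cos, Complex.ofReal_sin]
    ring
  · -- equilibria
    intro ρ θ hρ hθmem
    obtain ⟨hθ0, hθ1⟩ := hθmem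
    rw [hfρ, hfθ]
    constructor
    · rintro ⟨h1, h2⟩
      have hsin : Real.sin (4 * θ) = 0 := by
        rcases mul_eq_zero.mp h2 with h | h
        · exact absurd h (by positivity)
        · exact h
      rw [Real.sin_eq_zero_iff] at hsin
      obtain ⟨n, hn⟩ := hsin
      have hπ := Real.pi_pos
      have hn0 : (0:ℤ) ≤ n := by
        by_contra h
        push_neg at h
        have : (n:ℝ) < 0 := by exact_mod_cast h
        nlinarith
      have hn2 : n < 2 := by
        by_contra h
        push_neg at h
        have : (2:ℝ) ≤ (n:ℝ) := by exact_mod_cast h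
        nlinarith
      interval_cases n
      · -- θ = 0
        have hθeq : θ = 0 := by
          have : (0:ℝ) * π = 4 * θ := by exact_mod_cast hn
          linarith
        subst hθeq
        left
        refine ⟨?_, rfl⟩
        rw [mul_zero, Real.cos_zero] at h1
        have hγeq : γ = (2*ρ)^2 := by nlinarith
        have : Real.sqrt γ = 2 * ρ := by
          rw [hγeq]; exact Real.sqrt_sq (by linarith)
        linarith
      · -- θ = π/4
        have hθeq : θ = π / 4 := by
          have : (1:ℝ) * π = 4 * θ := by exact_mod_cast hn
          linarith
        subst hθeq
        right
        refine ⟨?_, rfl⟩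
        rw [show 4 * (π/4) = π by ring, Real.cos_pi] at h1
        have hγeq : γ / 2 = ρ^2 := by nlinarith
        rw [hγeq, Real.sqrt_sq hρ.le]
    · rintro (⟨h1, h2⟩ | ⟨h1, h2⟩)
      · subst h1; subst h2
        rw [mul_zero, Real.cos_zero, Real.sin_zero]
        refine ⟨?_, by ring⟩
        linear_combination (-(Real.sqrt γ)/2) * hsg
      · subst h1; subst h2
        rw [show 4 * (π/4) = π by ring, Real.cos_pi, Real.sin_pi]
        refine ⟨?_, by ring⟩
        linear_combination (-2*(Real.sqrt (γ/2))) * hsg2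
  · -- instability
    have hfun : (fun θ => fθ (Real.sqrt γ / 2) θ) = fun θ => (Real.sqrt γ / 2)^2 * Real.sin (4*θ) :=
      funext fun θ => hfθ _ θ
    have hd : HasDerivAt (fun θ : ℝ => (Real.sqrt γ / 2)^2 * Real.sin (4*θ))
        ((Real.sqrt γ / 2)^2 * (Real.cos (4*0) * (4*1))) 0 :=
      (((hasDerivAt_id (0:ℝ)).const_mul 4).sin).const_mul _
    rw [hfun, hd.deriv, mul_zero, Real.cos_zero]
    nlinarith
  · have hfun : (fun θ => fθ (sqrt (γ/2)) θ) = fun θ => (Real.sqrt (γ/2))^2 * Real.sin (4*θ) :=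
      funext fun θ => hfθ _ θ
    have hd : HasDerivAt (fun θ : ℝ => (Real.sqrt (γ/2))^2 * Real.sin (4*θ))
        ((Real.sqrt (γ/2))^2 * (Real.cos (4*(π/4)) * (4*1))) (π/4) :=
      (((hasDerivAt_id (π/4:ℝ)).const_mul 4).sin).const_mul _
    rw [hfun, hd.deriv, show 4*(π/4) = π by ring, Real.cos_pi]
    nlinarith
  · have hfun : (fun ρ => fρ ρ (π/4))
        = fun ρ => γ * ρ - 3 * ρ^3 - ρ^3 * Real.cos (4*(π/4)) :=
      funext fun ρ => hfρ ρ _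
    set s := Real.sqrt (γ/2)
    have hd : HasDerivAt (fun ρ : ℝ => γ * ρ - 3 * ρ^3 - ρ^3 * Real.cos (4*(π/4)))
        (γ * 1 - 3 * (3 * s^2 * 1) - 3 * s^2 * 1 * Real.cos (4*(π/4))) s := by
      have h1 := (hasDerivAt_id s).const_mul γ
      have h2 := ((hasDerivAt_id s).pow 3).const_mul 3
      have h3 := ((hasDerivAt_id s).pow 3).mul_const (Real.cos (4*(π/4)))
      have := (h1.sub h2).sub h3
      refine this.congr_deriv ?_
      simp only [id, Nat.cast_ofNat]
    rw [hfun, hd.deriv]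
    rw [show 4*(π/4) = π by ring, Real.cos_pi]
    nlinarith
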